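/- Let f: S → ℝ be layer-wise (L⁰, L¹)-smooth with L¹_i = 0 for all i = 1,…,p and satisfy the layer-wise Polyak–Łojasiewicz condition with constant μ > 0, with f⋆ = inf_{X∈S} f(X) > −∞, and let ε > 0. Let X⁰, X¹, …, X^K be iterates of deterministic Gluon with stepsizes t_i^k = ‖∇_i f(X^k)‖_{(i)⋆} / L⁰_i. Then with Δ⁰ = f(X⁰) − f⋆ and L⁰_max = max_i L⁰_i, if K = ⌈ (L⁰_max/μ) · log(Δ⁰/ε) ⌉, it holds that f(X^K) − f⋆ ≤ ε. -/

import Mathlib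

noncomputable section
open Finset

/-- Trace inner product `⟨A,B⟩ = tr(AᵀB)` on `m×n` real matrices (viewed as functions). -/
def tip {m n : ℕ} (A B : Fin m → Fin n → ℝ) : ℝ := ∑ a, ∑ b, A a b * B a b

/-- An arbitrary norm on the space of `m×n` real matrices. -/
structure MatNorm (m n : ℕ) where
  N : (Fin m → Fin n → ℝ) → ℝ
  pos : ∀ A, A ≠ 0 → 0 < N A
  zero : N 0 = 0
  smul : ∀ (c : ℝ) (A : Fin m → Fin n → ℝ), N (c • A) = |c| * N A
  triangle : ∀ A B, N (A + B) ≤ N A + N B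

/-- The dual norm `‖A‖⋆ = sup_{‖Z‖ ≤ 1} ⟨A, Z⟩`. -/
def MatNorm.dual {m n : ℕ} (nn : MatNorm m n) (A : Fin m → Fin n → ℝ) : ℝ :=
  sSup {r : ℝ | ∃ Z, nn.N Z ≤ 1 ∧ r = tip A Z}

/-- `Y` minimizes the linear functional `Z ↦ ⟨G, Z⟩` over the ball of radius `t`
centered at `C` (the linear minimization oracle). -/
def IsLMOMin {m n : ℕ} (nn : MatNorm m n) (G C : Fin m → Fin n → ℝ) (t : ℝ)
    (Y : Fin m → Fin n → ℝ) : Prop :=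
  nn.N (Y - C) ≤ t ∧ ∀ Z, nn.N (Z - C) ≤ t → tip G Y ≤ tip G Z

/-!
Each Gluon step is the exact minimiser of the layer-wise quadratic upper model given by the
descent lemma `f (X + d) ≤ f X + ∑ᵢ (⟨∇ᵢ f X, dᵢ⟩ + L⁰ᵢ ‖dᵢ‖² / 2)`: the linear minimisation
oracle with radius `‖∇ᵢ f X‖⋆ / L⁰ᵢ` decreases `f` by at least `∑ᵢ ‖∇ᵢ f X‖⋆² / (2 L⁰ₘₐₓ)`.
By the Polyak–Łojasiewicz inequality this is at least `(μ / L⁰ₘₐₓ) (f X − f⋆)`, so the gap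
contracts by `1 − μ / L⁰ₘₐₓ ≤ exp (−μ / L⁰ₘₐₓ)` per step. A layer with `L⁰ᵢ = 0` has a constant
gradient block, which must vanish since `f` is bounded below.
-/

section Tip

variable {m n : ℕ}

lemma tip_smul_right (A B : Fin m → Fin n → ℝ) (c : ℝ) : tip A (c • B) = c * tip A B := by
  simp [tip, Finset.mul_sum, mul_left_comm]

lemma tip_zero_right (A : Fin m → Fin n → ℝ) : tip A 0 = 0 := by simp [tip]

lemma tip_zero_left (A : Fin m → Fin n → ℝ) : tip 0 A = 0 := by simp [tip]

lemma tip_sub_right (A B C : Fin m → Fin n → ℝ) : tip A (B - C) = tip A B - tip A C := by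
  simp [tip, mul_sub]

lemma tip_sub_left (A B C : Fin m → Fin n → ℝ) : tip (A - B) C = tip A C - tip B C := by
  simp [tip, sub_mul]

lemma tip_self_pos {A : Fin m → Fin n → ℝ} (hA : A ≠ 0) : 0 < tip A A := by
  obtain ⟨a, b, hab⟩ : ∃ a b, A a b ≠ 0 := by
    by_contra! h
    exact hA (funext₂ h)
  exact Finset.sum_pos' (fun _ _ => Finset.sum_nonneg fun _ _ => mul_self_nonneg _)
    ⟨a, Finset.mem_univ a, Finset.sum_pos' (fun _ _ => mul_self_nonneg _)
      ⟨b, Finset.mem_univ b, mul_self_pos.mpr hab⟩⟩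

lemma continuous_tip (A : Fin m → Fin n → ℝ) : Continuous (tip A) := by
  unfold tip
  fun_prop

end Tip

namespace MatNorm

variable {m n : ℕ} (nn : MatNorm m n)

lemma N_neg (A : Fin m → Fin n → ℝ) : nn.N (-A) = nn.N A := by
  simpa using nn.smul (-1) A

lemma N_nonneg (A : Fin m → Fin n → ℝ) : 0 ≤ nn.N A := by
  have h := nn.triangle A (-A)
  rw [add_neg_cancel, nn.zero, N_neg] at h
  linarith

lemma convexOn_N : ConvexOn ℝ Set.univ nn.N := by
  refine ⟨convex_univ, fun A _ B _ a b ha hb _ => ?_⟩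
  calc nn.N (a • A + b • B) ≤ nn.N (a • A) + nn.N (b • B) := nn.triangle _ _
    _ = a • nn.N A + b • nn.N B := by
      rw [nn.smul, nn.smul, abs_of_nonneg ha, abs_of_nonneg hb, smul_eq_mul, smul_eq_mul]

lemma continuous_N : Continuous nn.N :=
  nn.convexOn_N.locallyLipschitz.continuous

/-- `c` is the minimum of `nn.N` on the (compact) unit sphere of the sup norm. -/
lemma exists_pos_mul_norm_le : ∃ c > 0, ∀ Z, c * ‖Z‖ ≤ nn.N Z := by
  rcases subsingleton_or_nontrivial (Fin m → Fin n → ℝ) with hs | hs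
  · exact ⟨1, one_pos, fun Z => by simp [Subsingleton.elim Z 0, nn.zero]⟩
  obtain ⟨z, hz, hmin⟩ := (isCompact_sphere (0 : Fin m → Fin n → ℝ) 1).exists_isMinOn
    (NormedSpace.sphere_nonempty.mpr zero_le_one) nn.continuous_N.continuousOn
  have hz1 : ‖z‖ = 1 := mem_sphere_zero_iff_norm.mp hz
  refine ⟨nn.N z, nn.pos z (norm_ne_zero_iff.mp (by simp [hz1])), fun Z => ?_⟩
  rcases eq_or_ne Z 0 with rfl | hZ
  · simp [nn.zero]
  have hnZ : 0 < ‖Z‖ := norm_pos_iff.mpr hZ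
  have hmin' : nn.N z ≤ ‖Z‖⁻¹ * nn.N Z := by
    have : nn.N z ≤ nn.N (‖Z‖⁻¹ • Z) := hmin (show ‖Z‖⁻¹ • Z ∈ Metric.sphere 0 1 by
      rw [mem_sphere_zero_iff_norm, norm_smul, norm_inv, norm_norm, inv_mul_cancel₀ hnZ.ne'])
    rwa [nn.smul, abs_inv, abs_norm] at this
  calc nn.N z * ‖Z‖ ≤ ‖Z‖⁻¹ * nn.N Z * ‖Z‖ := mul_le_mul_of_nonneg_right hmin' hnZ.le
    _ = nn.N Z := by field_simp

lemma isCompact_unitBall : IsCompact {Z | nn.N Z ≤ 1} := by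
  obtain ⟨c, hc, hcN⟩ := nn.exists_pos_mul_norm_le
  refine Metric.isCompact_of_isClosed_isBounded
    (isClosed_le nn.continuous_N continuous_const) ((Metric.isBounded_closedBall (x := 0)
      (r := c⁻¹)).subset fun Z (hZ : nn.N Z ≤ 1) => ?_)
  rw [mem_closedBall_zero_iff, ← one_div, le_div_iff₀' hc]
  exact (hcN Z).trans hZ

lemma bddAbove_dualSet (A : Fin m → Fin n → ℝ) :
    BddAbove {r : ℝ | ∃ Z, nn.N Z ≤ 1 ∧ r = tip A Z} := by
  obtain ⟨B, hB⟩ := nn.isCompact_unitBall.bddAbove_image (continuous_tip A).continuousOn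
  exact ⟨B, by rintro r ⟨Z, hZ, rfl⟩; exact hB ⟨Z, hZ, rfl⟩⟩

lemma tip_le_dual {A Z : Fin m → Fin n → ℝ} (h : nn.N Z ≤ 1) : tip A Z ≤ nn.dual A :=
  le_csSup (nn.bddAbove_dualSet A) ⟨Z, h, rfl⟩

lemma dual_nonneg (A : Fin m → Fin n → ℝ) : 0 ≤ nn.dual A := by
  simpa [tip_zero_right] using nn.tip_le_dual (A := A) (nn.zero.trans_le zero_le_one)

lemma mul_dual_le {A : Fin m → Fin n → ℝ} {t B : ℝ} (ht : 0 ≤ t)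
    (h : ∀ Z, nn.N Z ≤ 1 → t * tip A Z ≤ B) : t * nn.dual A ≤ B := by
  rcases ht.eq_or_lt with rfl | ht
  · simpa using h 0 (nn.zero.trans_le zero_le_one)
  rw [← le_div_iff₀' ht]
  refine csSup_le ⟨0, 0, nn.zero.trans_le zero_le_one, (tip_zero_right A).symm⟩ ?_
  rintro r ⟨Z, hZ, rfl⟩
  rw [le_div_iff₀' ht]
  exact h Z hZ

lemma dual_zero : nn.dual (0 : Fin m → Fin n → ℝ) = 0 := by
  refine le_antisymm ?_ (nn.dual_nonneg 0)
  simpa using nn.mul_dual_le (A := 0) (B := 0) zero_le_one fun Z _ => by simp [tip_zero_left]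

lemma tip_le_dual_mul_N (A Z : Fin m → Fin n → ℝ) : tip A Z ≤ nn.dual A * nn.N Z := by
  rcases eq_or_ne Z 0 with rfl | hZ
  · rw [tip_zero_right, nn.zero, mul_zero]
  have hNZ : 0 < nn.N Z := nn.pos Z hZ
  have h := nn.tip_le_dual (A := A) (Z := (nn.N Z)⁻¹ • Z)
    (by rw [nn.smul, abs_inv, abs_of_pos hNZ, inv_mul_cancel₀ hNZ.ne'])
  rw [tip_smul_right, inv_mul_le_iff₀ hNZ] at h
  linarith

end MatNorm

section LMO

variable {m n : ℕ} {nn : MatNorm m n} {G C Y : Fin m → Fin n → ℝ} {t : ℝ}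

/-- Test the optimality of `Y` against `C - t • Z` for `nn.N Z ≤ 1`. -/
lemma IsLMOMin.tip_sub_le (hY : IsLMOMin nn G C t Y) (ht : 0 ≤ t) :
    tip G (Y - C) ≤ -(t * nn.dual G) := by
  have h : t * nn.dual G ≤ tip G C - tip G Y := nn.mul_dual_le ht fun Z hZ => by
    have hmem : nn.N (C - t • Z - C) ≤ t := by
      rw [sub_sub_cancel_left, MatNorm.N_neg, nn.smul, abs_of_nonneg ht]
      exact mul_le_of_le_one_right ht hZ
    have := hY.2 _ hmem
    rw [tip_sub_right, tip_smul_right] at this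
    linarith
  rw [tip_sub_right]
  linarith

lemma IsLMOMin.tip_add_sq_le {L : ℝ} (hL : 0 < L) (hY : IsLMOMin nn G C (nn.dual G / L) Y) :
    tip G (Y - C) + L * nn.N (Y - C) ^ 2 / 2 ≤ -(nn.dual G ^ 2 / (2 * L)) := by
  have ht : 0 ≤ nn.dual G / L := div_nonneg (nn.dual_nonneg G) hL.le
  have hlin := hY.tip_sub_le ht
  have hsq : nn.N (Y - C) ^ 2 ≤ (nn.dual G / L) ^ 2 :=
    pow_le_pow_left₀ (nn.N_nonneg _) hY.1 2
  have hquad : -(nn.dual G / L * nn.dual G) + L * (nn.dual G / L) ^ 2 / 2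
      = -(nn.dual G ^ 2 / (2 * L)) := by
    field_simp
    ring
  nlinarith

end LMO

section Descent

variable {p : ℕ} {m n : Fin p → ℕ}

lemma tip_grad_sub_le (nn : ∀ i, MatNorm (m i) (n i))
    (g : (∀ i, Fin (m i) → Fin (n i) → ℝ) → ∀ i, Fin (m i) → Fin (n i) → ℝ) (L : Fin p → ℝ)
    (hsm : ∀ i X Y, (nn i).dual (g X i - g Y i) ≤ L i * (nn i).N (X i - Y i))
    (X d : ∀ i, Fin (m i) → Fin (n i) → ℝ) {s : ℝ} (hs : 0 ≤ s) (i : Fin p) :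
    tip (g (X + s • d) i) (d i) - tip (g X i) (d i) ≤ s * (L i * (nn i).N (d i) ^ 2) := by
  have hlip := hsm i (X + s • d) X
  have hstep : (X + s • d) i - X i = s • d i := by simp
  rw [hstep, (nn i).smul, abs_of_nonneg hs] at hlip
  calc tip (g (X + s • d) i) (d i) - tip (g X i) (d i)
      = tip (g (X + s • d) i - g X i) (d i) := (tip_sub_left _ _ _).symm
    _ ≤ (nn i).dual (g (X + s • d) i - g X i) * (nn i).N (d i) := (nn i).tip_le_dual_mul_N _ _
    _ ≤ L i * (s * (nn i).N (d i)) * (nn i).N (d i) :=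
      mul_le_mul_of_nonneg_right hlip ((nn i).N_nonneg _)
    _ = s * (L i * (nn i).N (d i) ^ 2) := by ring

/-- With `B = ∑ᵢ L i ‖dᵢ‖²`, `ψ s = f (X + s • d) - s ⟨∇f X, d⟩ - s² B / 2` is antitone on
`[0, 1]`: by `tip_grad_sub_le` its derivative is at most `s B - s B = 0`. -/
lemma layerwise_descent (nn : ∀ i, MatNorm (m i) (n i)) {f : (∀ i, Fin (m i) → Fin (n i) → ℝ) → ℝ}
    {g : (∀ i, Fin (m i) → Fin (n i) → ℝ) → ∀ i, Fin (m i) → Fin (n i) → ℝ}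
    (hf : Differentiable ℝ f) (hgrad : ∀ X H, fderiv ℝ f X H = ∑ i, tip (g X i) (H i))
    (L : Fin p → ℝ) (hsm : ∀ i X Y, (nn i).dual (g X i - g Y i) ≤ L i * (nn i).N (X i - Y i))
    (X d : ∀ i, Fin (m i) → Fin (n i) → ℝ) :
    f (X + d) ≤ f X + ∑ i, (tip (g X i) (d i) + L i * (nn i).N (d i) ^ 2 / 2) := by
  set A := ∑ i, tip (g X i) (d i)
  set B := ∑ i, L i * (nn i).N (d i) ^ 2
  set ψ : ℝ → ℝ := fun s => f (X + s • d) - s * A - s ^ 2 * (B / 2)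
  have hψ : ∀ s : ℝ, HasDerivAt ψ (∑ i, tip (g (X + s • d) i) (d i) - A - s * B) s := by
    intro s
    have hline : HasDerivAt (fun s : ℝ => X + s • d) d s := by
      simpa using ((hasDerivAt_id s).smul_const d).const_add X
    have hcomp := (hf (X + s • d)).hasFDerivAt.comp_hasDerivAt s hline
    rw [hgrad] at hcomp
    refine ((hcomp.sub ((hasDerivAt_id s).mul_const A)).sub
      ((hasDerivAt_pow 2 s).mul_const (B / 2))).congr_deriv ?_
    push_cast
    ring
  have hψ' : ∀ s ∈ interior (Set.Icc (0 : ℝ) 1), deriv ψ s ≤ 0 := by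
    intro s hs
    rw [interior_Icc] at hs
    have hsum := Finset.sum_le_sum fun i (_ : i ∈ Finset.univ) =>
      tip_grad_sub_le nn g L hsm X d hs.1.le i
    rw [Finset.sum_sub_distrib, ← Finset.mul_sum] at hsum
    rw [(hψ s).deriv]
    linarith
  have hψdiff : Differentiable ℝ ψ := fun s => (hψ s).differentiableAt
  have h01 := antitoneOn_of_deriv_nonpos (convex_Icc (0 : ℝ) 1) hψdiff.continuous.continuousOn
    hψdiff.differentiableOn hψ' (Set.left_mem_Icc.mpr zero_le_one)
    (Set.right_mem_Icc.mpr zero_le_one) zero_le_one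
  simp only [ψ, zero_smul, add_zero, one_smul, zero_mul, sub_zero, one_pow, one_mul] at h01
  rw [Finset.sum_add_distrib, ← Finset.sum_div]
  norm_num at h01
  linarith

/-- Along `d = s • (-G)` in layer `i`, the descent lemma with `L i = 0` gives
`f (X + d) ≤ f X - s ⟨G, G⟩`, which is unbounded below unless `G = 0`. -/
lemma grad_eq_zero_of_lipschitz_zero (nn : ∀ i, MatNorm (m i) (n i))
    {f : (∀ i, Fin (m i) → Fin (n i) → ℝ) → ℝ}
    {g : (∀ i, Fin (m i) → Fin (n i) → ℝ) → ∀ i, Fin (m i) → Fin (n i) → ℝ}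
    (hf : Differentiable ℝ f) (hgrad : ∀ X H, fderiv ℝ f X H = ∑ i, tip (g X i) (H i))
    (L : Fin p → ℝ) (hsm : ∀ i X Y, (nn i).dual (g X i - g Y i) ≤ L i * (nn i).N (X i - Y i))
    {fstar : ℝ} (hbelow : ∀ Y, fstar ≤ f Y) {i : Fin p} (hi : L i = 0)
    (X : ∀ i, Fin (m i) → Fin (n i) → ℝ) : g X i = 0 := by
  classical
  by_contra hG
  have hGG := tip_self_pos hG
  set s := (f X - fstar + 1) / tip (g X i) (g X i)
  have h := layerwise_descent nn hf hgrad L hsm X (Pi.single i (s • -g X i))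
  rw [Finset.sum_eq_single i (fun j _ hj => by simp [Pi.single_eq_of_ne hj, tip_zero_right,
    (nn j).zero]) (by simp)] at h
  have hs : s * tip (g X i) (g X i) = f X - fstar + 1 := div_mul_cancel₀ _ hGG.ne'
  simp only [Pi.single_eq_same, hi, zero_mul, zero_div, add_zero, tip_smul_right] at h
  have hneg : tip (g X i) (-g X i) = -tip (g X i) (g X i) := by
    simpa using tip_smul_right (g X i) (g X i) (-1)
  have := hbelow (X + Pi.single i (s • -g X i))
  rw [hneg] at h
  linarith

lemma gluon_step_le (nn : ∀ i, MatNorm (m i) (n i)) {f : (∀ i, Fin (m i) → Fin (n i) → ℝ) → ℝ}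
    {g : (∀ i, Fin (m i) → Fin (n i) → ℝ) → ∀ i, Fin (m i) → Fin (n i) → ℝ}
    (hf : Differentiable ℝ f) (hgrad : ∀ X H, fderiv ℝ f X H = ∑ i, tip (g X i) (H i))
    {L : Fin p → ℝ} (hL : ∀ i, 0 ≤ L i)
    (hsm : ∀ i X Y, (nn i).dual (g X i - g Y i) ≤ L i * (nn i).N (X i - Y i))
    {fstar : ℝ} (hbelow : ∀ Y, fstar ≤ f Y) {Lmax : ℝ}
    (hLle : ∀ i, L i ≤ Lmax) {X Y : ∀ i, Fin (m i) → Fin (n i) → ℝ}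
    (hY : ∀ i, IsLMOMin (nn i) (g X i) (X i) ((nn i).dual (g X i) / L i) (Y i)) :
    f Y ≤ f X - (∑ i, (nn i).dual (g X i) ^ 2) / (2 * Lmax) := by
  have hlayer : ∀ i, tip (g X i) ((Y - X) i) + L i * (nn i).N ((Y - X) i) ^ 2 / 2
      ≤ -((nn i).dual (g X i) ^ 2 / (2 * Lmax)) := by
    intro i
    rcases (hL i).eq_or_lt with hi | hi
    -- the oracle radius is the junk value `‖·‖⋆ / 0 = 0`, but the gradient block vanishes
    · rw [grad_eq_zero_of_lipschitz_zero nn hf hgrad L hsm hbelow hi.symm X]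
      simp [tip_zero_left, (nn i).dual_zero, ← hi]
    · calc _ ≤ -((nn i).dual (g X i) ^ 2 / (2 * L i)) := (hY i).tip_add_sq_le hi
        _ ≤ _ := neg_le_neg <| div_le_div_of_nonneg_left (sq_nonneg _) (by positivity)
          (by linarith [hLle i])
  have hdesc := layerwise_descent nn hf hgrad L hsm X (Y - X)
  rw [add_sub_cancel] at hdesc
  have hsum := Finset.sum_le_sum fun i (_ : i ∈ Finset.univ) => hlayer i
  rw [Finset.sum_neg_distrib, ← Finset.sum_div] at hsum
  linarith

end Descent

lemma le_exp_mul_of_contraction {a : ℕ → ℝ} {q : ℝ} (ha : ∀ k, 0 ≤ a k)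
    (h : ∀ k, a (k + 1) ≤ (1 - q) * a k) (k : ℕ) : a k ≤ Real.exp (-(q * k)) * a 0 := by
  induction k with
  | zero => simp
  | succ k ih =>
    calc a (k + 1) ≤ (1 - q) * a k := h k
      _ ≤ Real.exp (-q) * a k :=
        mul_le_mul_of_nonneg_right (by linarith [Real.add_one_le_exp (-q)]) (ha k)
      _ ≤ Real.exp (-q) * (Real.exp (-(q * k)) * a 0) :=
        mul_le_mul_of_nonneg_left ih (Real.exp_nonneg _)
      _ = Real.exp (-(q * (k + 1 : ℕ))) * a 0 := by
        rw [← mul_assoc, ← Real.exp_add]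
        push_cast
        ring_nf

lemma le_of_contraction_ceil_log {a : ℕ → ℝ} {q ε : ℝ} (hq : 0 < q) (hε : 0 < ε)
    (ha : ∀ k, 0 ≤ a k) (h : ∀ k, a (k + 1) ≤ (1 - q) * a k) :
    a ⌈q⁻¹ * Real.log (a 0 / ε)⌉₊ ≤ ε := by
  set K := ⌈q⁻¹ * Real.log (a 0 / ε)⌉₊
  have hK := le_exp_mul_of_contraction ha h K
  rcases le_or_gt (a 0) ε with h0 | h0
  · have hexp : Real.exp (-(q * K)) ≤ 1 := Real.exp_le_one_iff.2 (neg_nonpos.2 (by positivity))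
    nlinarith [ha 0]
  · have hlog : Real.log (a 0 / ε) ≤ q * K := by
      rw [← inv_mul_le_iff₀ hq]
      exact Nat.le_ceil _
    calc a K ≤ Real.exp (-(q * K)) * a 0 := hK
      _ ≤ Real.exp (-Real.log (a 0 / ε)) * a 0 := by gcongr; exact ha 0
      _ = ε := by
        have ha0 : 0 < a 0 := hε.trans h0
        rw [Real.exp_neg, Real.exp_log (div_pos ha0 hε), inv_div, div_mul_cancel₀ _ ha0.ne']

theorem stmt_9_general {p : ℕ} {m n : Fin p → ℕ}
    (nn : ∀ i, MatNorm (m i) (n i))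
    (f : (∀ i, Fin (m i) → Fin (n i) → ℝ) → ℝ)
    (g : (∀ i, Fin (m i) → Fin (n i) → ℝ) → ∀ i, Fin (m i) → Fin (n i) → ℝ)
    (hdiff : ContDiff ℝ 1 f)
    (hgrad : ∀ X H, fderiv ℝ f X H = ∑ i, tip (g X i) (H i))
    (L0 L1 : Fin p → ℝ) (hL0 : ∀ i, 0 ≤ L0 i) (hL1 : ∀ i, L1 i = 0)
    (hsmooth : ∀ i X Y, (nn i).dual (g X i - g Y i)
      ≤ (L0 i + L1 i * (nn i).dual (g X i)) * (nn i).N (X i - Y i))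
    (fstar : ℝ) (hfstar : IsGLB (Set.range f) fstar)
    (μ : ℝ) (hμ : 0 < μ)
    (hPL : ∀ X, 2 * μ * (f X - fstar) ≤ ∑ i, ((nn i).dual (g X i)) ^ 2)
    (ε : ℝ) (hε : 0 < ε)
    (X : ℕ → ∀ i, Fin (m i) → Fin (n i) → ℝ)
    (hupd : ∀ k i, IsLMOMin (nn i) (g (X k) i) (X k i)
      ((nn i).dual (g (X k) i) / L0 i) (X (k + 1) i))
    (K : ℕ)
    (hK : K = ⌈(⨆ i, L0 i) / μ * Real.log ((f (X 0) - fstar) / ε)⌉₊) :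
    f (X K) - fstar ≤ ε := by
  have hf := hdiff.differentiable one_ne_zero
  have hbelow : ∀ Y, fstar ≤ f Y := fun Y => hfstar.1 ⟨Y, rfl⟩
  have hsm : ∀ i X Y, (nn i).dual (g X i - g Y i) ≤ L0 i * (nn i).N (X i - Y i) := by
    simpa [hL1] using hsmooth
  set Lmax := ⨆ i, L0 i
  have hLle : ∀ i, L0 i ≤ Lmax := le_ciSup (Set.finite_range L0).bddAbove
  rcases (Real.iSup_nonneg hL0).eq_or_lt with hLmax | hLmax
  · have hgrad0 : ∀ i, g (X K) i = 0 := fun i => grad_eq_zero_of_lipschitz_zero nn hf hgrad L0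
      hsm hbelow (le_antisymm (hLmax ▸ hLle i) (hL0 i)) (X K)
    have hgap : 2 * μ * (f (X K) - fstar) ≤ 0 := by
      simpa [hgrad0, MatNorm.dual_zero] using hPL (X K)
    nlinarith
  have hcontr : ∀ k, f (X (k + 1)) - fstar ≤ (1 - μ / Lmax) * (f (X k) - fstar) := by
    intro k
    have hstep := gluon_step_le nn hf hgrad hL0 hsm hbelow hLle (hupd k)
    have hPLk : μ / Lmax * (f (X k) - fstar)
        ≤ (∑ i, (nn i).dual (g (X k) i) ^ 2) / (2 * Lmax) :=
      calc μ / Lmax * (f (X k) - fstar) = 2 * μ * (f (X k) - fstar) / (2 * Lmax) := by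
            field_simp
        _ ≤ _ := div_le_div_of_nonneg_right (hPL (X k)) (by positivity)
    linarith
  rw [hK, ← inv_div]
  exact le_of_contraction_ceil_log (div_pos hμ hLmax) hε (fun k => sub_nonneg.2 (hbelow _)) hcontr

/-- Deterministic Gluon under layer-wise `(L⁰,L¹)`-smoothness with `L¹ᵢ = 0` for all `i`,
under the layer-wise Polyak–Łojasiewicz condition with constant `μ > 0`, with stepsizes
`tᵢᵏ = ‖∇ᵢf(Xᵏ)‖⋆/L⁰ᵢ`: after `K = ⌈(L⁰ₘₐₓ/μ) log(Δ⁰/ε)⌉` iterations,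
`f(X^K) − f⋆ ≤ ε`. -/
theorem stmt_9 {p : ℕ} (hp : 0 < p) {m n : Fin p → ℕ}
    (nn : ∀ i, MatNorm (m i) (n i))
    (f : (∀ i, Fin (m i) → Fin (n i) → ℝ) → ℝ)
    (g : (∀ i, Fin (m i) → Fin (n i) → ℝ) → ∀ i, Fin (m i) → Fin (n i) → ℝ)
    (hdiff : ContDiff ℝ 1 f)
    (hgrad : ∀ X H, fderiv ℝ f X H = ∑ i, tip (g X i) (H i))
    (L0 L1 : Fin p → ℝ) (hL0 : ∀ i, 0 ≤ L0 i) (hL1 : ∀ i, L1 i = 0)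
    (hsmooth : ∀ i X Y, (nn i).dual (g X i - g Y i)
      ≤ (L0 i + L1 i * (nn i).dual (g X i)) * (nn i).N (X i - Y i))
    (fstar : ℝ) (hfstar : IsGLB (Set.range f) fstar)
    (μ : ℝ) (hμ : 0 < μ)
    (hPL : ∀ X, 2 * μ * (f X - fstar) ≤ ∑ i, ((nn i).dual (g X i)) ^ 2)
    (ε : ℝ) (hε : 0 < ε)
    (X : ℕ → ∀ i, Fin (m i) → Fin (n i) → ℝ)
    (hupd : ∀ k i, IsLMOMin (nn i) (g (X k) i) (X k i)
      ((nn i).dual (g (X k) i) / L0 i) (X (k + 1) i))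
    (K : ℕ)
    (hK : K = ⌈(⨆ i, L0 i) / μ * Real.log ((f (X 0) - fstar) / ε)⌉₊) :
    f (X K) - fstar ≤ ε :=
  stmt_9_general nn f g hdiff hgrad L0 L1 hL0 hL1 hsmooth fstar hfstar μ hμ hPL ε hε X hupd K hK
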